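/- Let m be a positive integer and B ≥ C√m for a sufficiently large absolute constant C > 0. Then for every polynomial q of degree at most m, B² · E_{X∼N(0,1)}[q(X)²] ≥ 2 · E_{X∼N(0,1)}[X² q(X)²]. -/

import Mathlib

open MeasureTheory ProbabilityTheory Polynomial Real Filter
open scoped NNReal ENNReal

noncomputable section StmtAux

namespace StmtAux

/-- Gaussian weight. -/
def G (x : ℝ) : ℝ := Real.exp (-(1/2) * x^2)

lemma G_pos (x : ℝ) : 0 < G x := Real.exp_pos _

lemma integrable_pow_G (n : ℕ) : Integrable (fun x : ℝ => x ^ n * G x) := by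
  have h := integrable_rpow_mul_exp_neg_mul_sq (b := 1/2) (by norm_num) (s := (n : ℝ))
    (lt_of_lt_of_le (by norm_num) (Nat.cast_nonneg n))
  simpa [G, Real.rpow_natCast] using h

lemma integrable_poly_G (p : Polynomial ℝ) : Integrable (fun x : ℝ => p.eval x * G x) := by
  induction p using Polynomial.induction_on' with
  | add p q hp hq => simp only [eval_add, add_mul]; exact hp.add hq
  | monomial n a => simpa [eval_monomial, mul_assoc] using (integrable_pow_G n).const_mul a

lemma tendsto_pow_G_top (n : ℕ) : Tendsto (fun x : ℝ => x ^ n * G x) atTop (nhds 0) := by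
  have h := rpow_mul_exp_neg_mul_sq_isLittleO_exp_neg (b := (1/2 : ℝ)) (by norm_num) (n : ℝ)
  have h2 : Tendsto (fun x : ℝ => Real.exp (-(1/2) * x)) atTop (nhds 0) := by
    apply Real.tendsto_exp_atBot.comp
    exact (tendsto_const_mul_atBot_of_neg (by norm_num)).mpr tendsto_id
  have h3 := h.trans_tendsto h2
  simpa [G, Real.rpow_natCast] using h3

lemma tendsto_poly_G_top (p : Polynomial ℝ) :
    Tendsto (fun x : ℝ => p.eval x * G x) atTop (nhds 0) := by
  induction p using Polynomial.induction_on' with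
  | add p q hp hq => simpa [add_mul] using hp.add hq
  | monomial n a =>
      have := (tendsto_pow_G_top n).const_mul a
      simpa [eval_monomial, mul_assoc] using this

lemma tendsto_poly_G_bot (p : Polynomial ℝ) :
    Tendsto (fun x : ℝ => p.eval x * G x) atBot (nhds 0) := by
  have h := (tendsto_poly_G_top (p.comp (-X))).comp tendsto_neg_atBot_atTop
  have : ((fun x : ℝ => (p.comp (-X)).eval x * G x) ∘ fun x : ℝ => -x)
      = fun x : ℝ => p.eval x * G x := by
    funext x
    simp [Function.comp, eval_comp, G, neg_sq]
  rwa [this] at h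

/-- The unnormalized Gaussian integral of a polynomial. -/
def J (p : Polynomial ℝ) : ℝ := ∫ x : ℝ, p.eval x * G x

lemma J_zero : J 0 = 0 := by simp [J]

lemma J_add (p q : Polynomial ℝ) : J (p + q) = J p + J q := by
  simp only [J, eval_add, add_mul]
  exact integral_add (integrable_poly_G p) (integrable_poly_G q)

lemma J_sub (p q : Polynomial ℝ) : J (p - q) = J p - J q := by
  simp only [J, eval_sub, sub_mul]
  exact integral_sub (integrable_poly_G p) (integrable_poly_G q)

lemma J_smul (a : ℝ) (p : Polynomial ℝ) : J (C a * p) = a * J p := by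
  simp only [J, eval_mul, eval_C, mul_assoc]
  exact integral_const_mul a _

lemma J_sq_nonneg (p : Polynomial ℝ) : 0 ≤ J (p ^ 2) := by
  apply integral_nonneg
  intro x
  simp only [eval_pow]
  exact mul_nonneg (sq_nonneg _) (G_pos x).le

lemma J_mono {p q : Polynomial ℝ} (h : ∀ x, p.eval x ≤ q.eval x) : J p ≤ J q := by
  apply integral_mono (integrable_poly_G p) (integrable_poly_G q)
  intro x
  exact mul_le_mul_of_nonneg_right (h x) (G_pos x).le

/-- Gaussian integration by parts for polynomials. -/
lemma J_ibp (p : Polynomial ℝ) : J (X * p) = J (derivative p) := by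
  have key : ∫ x : ℝ, (derivative p - X * p).eval x * G x = 0 - 0 := by
    apply integral_of_hasDerivAt_of_tendsto
      (f := fun x : ℝ => p.eval x * G x)
    · intro x
      have hG : HasDerivAt G (-x * G x) x := by
        have h1 : HasDerivAt (fun x : ℝ => -(1/2) * x^2) (-x) x := by
          have := (hasDerivAt_pow 2 x).const_mul (-(1/2) : ℝ)
          refine this.congr_deriv ?_
          norm_num
          ring
        have h2 := h1.exp
        show HasDerivAt (fun x : ℝ => Real.exp (-(1/2) * x^2)) (-x * Real.exp (-(1/2) * x^2)) x
        simpa [mul_comm] using h2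
      have hp : HasDerivAt (fun x : ℝ => p.eval x) ((derivative p).eval x) x :=
        p.hasDerivAt x
      have := hp.mul hG
      refine this.congr_deriv ?_
      simp only [eval_sub, eval_mul, eval_X, sub_mul]
      ring
    · exact integrable_poly_G _
    · exact tendsto_poly_G_bot p
    · exact tendsto_poly_G_top p
  have key' : J (derivative p - X * p) = 0 := by
    unfold J
    simpa using key
  rw [J_sub] at key'
  linarith

end StmtAux

namespace Part2

open StmtAux

/-- Real probabilists' Hermite polynomials. -/
noncomputable def H (n : ℕ) : Polynomial ℝ := (hermite n).map (Int.castRingHom ℝ)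

lemma H_zero : H 0 = 1 := by simp [H]

lemma H_succ (n : ℕ) : H (n + 1) = X * H n - derivative (H n) := by
  simp [H, hermite_succ, Polynomial.map_sub, Polynomial.map_mul, derivative_map]

lemma coeff_H_of_lt {n k : ℕ} (h : n < k) : (H n).coeff k = 0 := by
  simp [H, coeff_map, coeff_hermite_of_lt h]

lemma coeff_H_self (n : ℕ) : (H n).coeff n = 1 := by
  simp [H, coeff_map, coeff_hermite_self]

lemma natDegree_H (n : ℕ) : (H n).natDegree = n := by
  rw [H, natDegree_map_eq_of_injective, natDegree_hermite]
  exact Int.cast_injective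

lemma deriv_H : ∀ n : ℕ, derivative (H n) = C (n : ℝ) * H (n - 1) := by
  intro n
  induction n using Nat.strong_induction_on with
  | _ n IH =>
    match n with
    | 0 => simp [H_zero]
    | 1 => simp [H_succ, H_zero, hermite_one]
    | (k + 2) =>
        have ih1 := IH (k + 1) (by omega)
        have ih0 := IH k (by omega)
        rw [H_succ (k + 1)]
        simp only [show k + 2 - 1 = k + 1 from rfl, show k + 1 - 1 = k from rfl] 
        rw [derivative_sub, derivative_mul, derivative_X, ih1]
        simp only [show k + 1 - 1 = k from rfl]
        rw [derivative_mul, derivative_C, ih0]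
        rw [H_succ k, ih0]
        simp only [Nat.cast_add, Nat.cast_one, Nat.cast_ofNat, map_add, map_one, map_ofNat]
        ring

lemma J_orth : ∀ n : ℕ, ∀ p : Polynomial ℝ, p.natDegree < n → J (H n * p) = 0 := by
  intro n
  induction n with
  | zero => intro p hp; exact absurd hp (Nat.not_lt_zero _)
  | succ n ih =>
    intro p hp
    have key : J (H (n + 1) * p) = J (H n * derivative p) :=
      calc J (H (n + 1) * p)
          = J (X * (H n * p)) - J (derivative (H n) * p) := by
            rw [← J_sub]; congr 1; rw [H_succ]; ring
        _ = J (derivative (H n * p)) - J (derivative (H n) * p) := by rw [J_ibp]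
        _ = J (H n * derivative p) := by
            rw [derivative_mul, J_add]; ring
    rw [key]
    by_cases hp0 : p.natDegree = 0
    · obtain ⟨a, rfl⟩ := Polynomial.natDegree_eq_zero.mp hp0
      simp [J_zero]
    · exact ih _ (lt_of_lt_of_le (natDegree_derivative_lt hp0) (Nat.lt_succ_iff.mp hp))

lemma J_H_sq_succ (n : ℕ) : J (H (n + 1) ^ 2) = ((n : ℝ) + 1) * J (H n ^ 2) := by
  calc J (H (n + 1) ^ 2)
      = J (X * (H n * H (n + 1))) - J (derivative (H n) * H (n + 1)) := by
        rw [← J_sub]; congr 1; rw [H_succ]; ring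
    _ = J (derivative (H n * H (n + 1))) - J (derivative (H n) * H (n + 1)) := by rw [J_ibp]
    _ = J (H n * derivative (H (n + 1))) := by
        rw [derivative_mul, J_add]; ring
    _ = ((n : ℝ) + 1) * J (H n ^ 2) := by
        rw [deriv_H (n + 1), Nat.add_sub_cancel]
        have : H n * (C ((n : ℝ) + 1) * H n) = C ((n : ℝ) + 1) * H n ^ 2 := by ring
        rw [show ((n + 1 : ℕ) : ℝ) = (n : ℝ) + 1 by push_cast; ring, this, J_smul]

lemma J_expand (a : ℝ) (h r : Polynomial ℝ) :
    J ((C a * h + r) ^ 2) = a ^ 2 * J (h ^ 2) + 2 * a * J (h * r) + J (r ^ 2) := by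
  have e : (C a * h + r) ^ 2 = C (a ^ 2) * h ^ 2 + (C (2 * a) * (h * r) + r ^ 2) := by
    rw [map_pow, map_mul]
    rw [show (C 2 : Polynomial ℝ) = 2 from map_ofNat C 2]
    ring
  rw [e, J_add, J_add, J_smul, J_smul]
  ring

lemma J_spec : ∀ m : ℕ, ∀ q : Polynomial ℝ, q.natDegree ≤ m →
    J ((derivative q) ^ 2) ≤ (m : ℝ) * J (q ^ 2) := by
  intro m
  induction m with
  | zero =>
    intro q hq
    obtain ⟨a, rfl⟩ := Polynomial.natDegree_eq_zero.mp (Nat.le_zero.mp hq)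
    simp [J_zero]
  | succ m ih =>
    intro q hq
    set c := q.coeff (m + 1) with hc
    set r := q - C c * H (m + 1) with hrdef
    have hr : r.natDegree ≤ m := by
      rw [natDegree_le_iff_coeff_eq_zero]
      intro k hk
      rcases eq_or_lt_of_le (Nat.succ_le_of_lt hk) with hk1 | hk1
      · rw [hrdef, coeff_sub, coeff_C_mul, ← hk1, coeff_H_self, ← hc]; ring
      · rw [hrdef, coeff_sub, coeff_C_mul, coeff_H_of_lt (by omega),
          coeff_eq_zero_of_natDegree_lt (lt_of_le_of_lt hq hk1)]
        ring
    have hqe : q = C c * H (m + 1) + r := by rw [hrdef]; ring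
    -- derivative decomposition
    have hde : derivative q = C (c * ((m : ℝ) + 1)) * H m + derivative r := by
      rw [hqe, derivative_add, derivative_mul, derivative_C, deriv_H (m + 1)]
      simp only [show m + 1 - 1 = m from rfl]
      rw [show ((m + 1 : ℕ) : ℝ) = (m : ℝ) + 1 by push_cast; ring]
      rw [map_mul]
      ring
    have horth : J (H (m + 1) * r) = 0 := J_orth (m + 1) r (Nat.lt_succ_of_le hr)
    have horth' : J (H m * derivative r) = 0 := by
      by_cases hr0 : r.natDegree = 0
      · obtain ⟨a, hra⟩ := Polynomial.natDegree_eq_zero.mp hr0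
        rw [← hra]
        simp [J_zero]
      · exact J_orth m _ (lt_of_lt_of_le (natDegree_derivative_lt hr0) hr)
    have e1 : J (q ^ 2) = c ^ 2 * J (H (m + 1) ^ 2) + J (r ^ 2) := by
      rw [hqe, J_expand, horth]; ring
    have e2 : J ((derivative q) ^ 2)
        = (c * ((m : ℝ) + 1)) ^ 2 * J (H m ^ 2) + J ((derivative r) ^ 2) := by
      rw [hde, J_expand, horth']; ring
    have e3 := J_H_sq_succ m
    have e4 := ih r hr
    have e5 := J_sq_nonneg r
    have e6 := J_sq_nonneg (H m)
    rw [e1, e2, e3]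
    push_cast
    nlinarith [sq_nonneg c, sq_nonneg (c * ((m:ℝ)+1))]

lemma J_main (m : ℕ) (q : Polynomial ℝ) (hq : q.natDegree ≤ m) :
    J (X ^ 2 * q ^ 2) ≤ (4 * (m : ℝ) + 2) * J (q ^ 2) := by
  set D : Polynomial ℝ := X * (q * derivative q) with hD
  have step1 : J (X ^ 2 * q ^ 2) = J (q ^ 2) + (J D + J D) := by
    have e : X ^ 2 * q ^ 2 = X * (X * q ^ 2) := by ring
    have e2 : derivative (X * q ^ 2) = q ^ 2 + (D + D) := by
      rw [derivative_mul, derivative_X, derivative_pow, hD]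
      push_cast
      rw [map_ofNat C 2]
      ring
    rw [e, J_ibp, e2, J_add, J_add]
  have step2 : J D ≤ 4⁻¹ * J (X ^ 2 * q ^ 2) + J ((derivative q) ^ 2) := by
    have hmono : J D ≤ J (C (4⁻¹ : ℝ) * (X ^ 2 * q ^ 2) + (derivative q) ^ 2) := by
      apply J_mono
      intro x
      simp only [hD, eval_add, eval_mul, eval_pow, eval_X, eval_C]
      nlinarith [sq_nonneg (x * q.eval x / 2 - (derivative q).eval x)]
    rw [J_add, J_smul] at hmono
    exact hmono
  have hspec := J_spec m q hq
  linarith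

lemma integral_eq (p : Polynomial ℝ) :
    ∫ x, p.eval x ∂(gaussianReal 0 1) = (Real.sqrt (2 * π))⁻¹ * J p := by
  rw [gaussianReal_of_var_ne_zero 0 one_ne_zero]
  have hpdf : (gaussianPDF 0 1)
      = fun x => ((Real.toNNReal (gaussianPDFReal 0 1 x) : ℝ≥0) : ℝ≥0∞) := rfl
  rw [hpdf, integral_withDensity_eq_integral_smul
    (measurable_gaussianPDFReal 0 1).real_toNNReal]
  have key : ∀ x : ℝ, (Real.toNNReal (gaussianPDFReal 0 1 x)) • p.eval x
      = (Real.sqrt (2 * π))⁻¹ * (p.eval x * G x) := by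
    intro x
    have hnn : 0 ≤ gaussianPDFReal 0 1 x := gaussianPDFReal_nonneg 0 1 x
    rw [NNReal.smul_def, smul_eq_mul, Real.coe_toNNReal _ hnn]
    have : gaussianPDFReal 0 1 x = (Real.sqrt (2 * π))⁻¹ * G x := by
      simp only [gaussianPDFReal, NNReal.coe_one, mul_one, sub_zero, G]
      congr 2
      ring
    rw [this]
    ring
  simp_rw [key]
  rw [integral_const_mul]
  rfl

end Part2

end StmtAux

/-- For `B ≥ C√m` with `C` a large enough absolute constant, every polynomial `q`
of degree at most `m` satisfies `B² E[q(X)²] ≥ 2 E[X² q(X)²]` for `X ∼ N(0,1)`. -/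
theorem stmt3 : ∃ C > (0:ℝ), ∀ m : ℕ, 0 < m → ∀ B : ℝ, C * Real.sqrt m ≤ B →
    ∀ q : Polynomial ℝ, q.natDegree ≤ m →
    2 * ∫ x, x^2 * (q.eval x)^2 ∂(gaussianReal 0 1) ≤
      B^2 * ∫ x, (q.eval x)^2 ∂(gaussianReal 0 1) := by
  refine ⟨10, by norm_num, ?_⟩
  intro m hm B hB q hq
  have e1 : (∫ x, x^2 * (q.eval x)^2 ∂(gaussianReal 0 1))
      = (Real.sqrt (2 * π))⁻¹ * StmtAux.J (X ^ 2 * q ^ 2) := by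
    rw [← Part2.integral_eq]
    apply integral_congr_ae
    filter_upwards with x
    simp [eval_pow, eval_mul]
  have e2 : (∫ x, (q.eval x)^2 ∂(gaussianReal 0 1))
      = (Real.sqrt (2 * π))⁻¹ * StmtAux.J (q ^ 2) := by
    rw [← Part2.integral_eq]
    apply integral_congr_ae
    filter_upwards with x
    simp [eval_pow]
  have hmain := Part2.J_main m q hq
  have hJq := StmtAux.J_sq_nonneg q
  have hm1 : (1 : ℝ) ≤ (m : ℝ) := by exact_mod_cast hm
  have hB2 : (100 : ℝ) * m ≤ B ^ 2 := by
    have h0 : (0:ℝ) ≤ 10 * Real.sqrt m := by positivity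
    nlinarith [Real.sq_sqrt (show (0:ℝ) ≤ (m:ℝ) from Nat.cast_nonneg m),
      Real.sqrt_nonneg (m : ℝ), hB]
  have hkey : 2 * StmtAux.J (X ^ 2 * q ^ 2) ≤ B ^ 2 * StmtAux.J (q ^ 2) := by
    nlinarith [hmain, hB2, hJq, hm1]
  have hc : (0:ℝ) ≤ (Real.sqrt (2 * π))⁻¹ := by positivity
  rw [e1, e2]
  calc 2 * ((Real.sqrt (2 * π))⁻¹ * StmtAux.J (X ^ 2 * q ^ 2))
      = (Real.sqrt (2 * π))⁻¹ * (2 * StmtAux.J (X ^ 2 * q ^ 2)) := by ring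
    _ ≤ (Real.sqrt (2 * π))⁻¹ * (B ^ 2 * StmtAux.J (q ^ 2)) :=
        mul_le_mul_of_nonneg_left hkey hc
    _ = B ^ 2 * ((Real.sqrt (2 * π))⁻¹ * StmtAux.J (q ^ 2)) := by ring
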